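/- arXiv:2603.03787 — 6 statements merged into one kernel-verified Lean document; each statement's English description precedes it below -/
import Mathlib

section
/- Let f : ℝᵖ → ℝ be bounded below, ρ > 0, let U be a real p×q matrix and u ∈ ℝᵖ, and define R_ρ : ℝ^q → ℝ by R_ρ(s) := D_{ρ,f}(U s + u). If s ∈ ℝ^q and ζ ∈ prox_{ρ f}(U s + u), then (1/ρ)Uᵀζ is a subgradient of the convex function R_ρ at s; that is, for every s' ∈ ℝ^q, R_ρ(s') ≥ R_ρ(s) + (1/ρ)⟨Uᵀ ζ, s' − s⟩. -/
open scoped InnerProductSpace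

lemma aux_bdd {p : ℕ} (f : EuclideanSpace ℝ (Fin p) → ℝ)
    (hf : BddBelow (Set.range f)) (ρ : ℝ) (hρ : 0 < ρ)
    (v : EuclideanSpace ℝ (Fin p)) :
    BddAbove (Set.range fun w' : EuclideanSpace ℝ (Fin p) =>
      ((1 / ρ) * ⟪v, w'⟫_ℝ - (1 / (2 * ρ)) * ‖w'‖ ^ 2 - f w')) := by
  obtain ⟨B, hB⟩ := hf
  refine ⟨(1 / (2 * ρ)) * ‖v‖ ^ 2 - B, ?_⟩
  rintro x ⟨w', rfl⟩
  have hfB : B ≤ f w' := hB ⟨w', rfl⟩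
  have h1 : ‖v - w'‖ ^ 2 = ‖v‖ ^ 2 - 2 * ⟪v, w'⟫_ℝ + ‖w'‖ ^ 2 := by
    rw [norm_sub_sq_real]
  have h2 : (0:ℝ) ≤ ‖v - w'‖ ^ 2 := by positivity
  have h3 : (0:ℝ) < 1 / (2 * ρ) := by positivity
  have hρ2 : (1 / ρ : ℝ) = 2 * (1 / (2 * ρ)) := by field_simp
  simp only []
  nlinarith [mul_le_mul_of_nonneg_left h2 h3.le, h1]

/-- If `f : ℝᵖ → ℝ` is bounded below, `ρ > 0`, `U : ℝ^q → ℝᵖ` is linear with adjoint `Uᵀ`,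
`u ∈ ℝᵖ`, `R_ρ(s) := D_{ρ,f}(U s + u)`, and `ζ ∈ prox_{ρ f}(U s + u)`, then `(1/ρ)Uᵀζ` is
a subgradient of `R_ρ` at `s`: `R_ρ(s') ≥ R_ρ(s) + (1/ρ)⟪Uᵀ ζ, s' − s⟫` for all `s'`. -/
theorem stmt_4 {p q : ℕ} (f : EuclideanSpace ℝ (Fin p) → ℝ)
    (hf : BddBelow (Set.range f)) (ρ : ℝ) (hρ : 0 < ρ)
    (U : EuclideanSpace ℝ (Fin q) →L[ℝ] EuclideanSpace ℝ (Fin p))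
    (u : EuclideanSpace ℝ (Fin p))
    (s : EuclideanSpace ℝ (Fin q)) (ζ : EuclideanSpace ℝ (Fin p))
    (hζ : ∀ w' : EuclideanSpace ℝ (Fin p),
      (1 / (2 * ρ)) * ‖ζ - (U s + u)‖ ^ 2 + f ζ ≤
        (1 / (2 * ρ)) * ‖w' - (U s + u)‖ ^ 2 + f w') :
    ∀ s' : EuclideanSpace ℝ (Fin q),
      (⨆ w' : EuclideanSpace ℝ (Fin p),
          ((1 / ρ) * ⟪U s' + u, w'⟫_ℝ - (1 / (2 * ρ)) * ‖w'‖ ^ 2 - f w')) ≥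
        (⨆ w' : EuclideanSpace ℝ (Fin p),
          ((1 / ρ) * ⟪U s + u, w'⟫_ℝ - (1 / (2 * ρ)) * ‖w'‖ ^ 2 - f w')) +
          (1 / ρ) * ⟪(ContinuousLinearMap.adjoint U) ζ, s' - s⟫_ℝ := by
  intro s'
  set v := U s + u with hv
  set v' := U s' + u with hv'
  -- sup at s equals value at ζ
  have hmax : ∀ w', (1 / ρ) * ⟪v, w'⟫_ℝ - (1 / (2 * ρ)) * ‖w'‖ ^ 2 - f w' ≤
      (1 / ρ) * ⟪v, ζ⟫_ℝ - (1 / (2 * ρ)) * ‖ζ‖ ^ 2 - f ζ := by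
    intro w'
    have h := hζ w'
    have e1 : ‖ζ - v‖ ^ 2 = ‖ζ‖ ^ 2 - 2 * ⟪ζ, v⟫_ℝ + ‖v‖ ^ 2 := by
      rw [norm_sub_sq_real]
    have e2 : ‖w' - v‖ ^ 2 = ‖w'‖ ^ 2 - 2 * ⟪w', v⟫_ℝ + ‖v‖ ^ 2 := by
      rw [norm_sub_sq_real]
    have e3 : ⟪ζ, v⟫_ℝ = ⟪v, ζ⟫_ℝ := real_inner_comm _ _
    have e4 : ⟪w', v⟫_ℝ = ⟪v, w'⟫_ℝ := real_inner_comm _ _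
    rw [e1, e2, e3, e4] at h
    have hρ2 : (1 / ρ : ℝ) = 2 * (1 / (2 * ρ)) := by field_simp
    nlinarith [h]
  have hsup : (⨆ w' : EuclideanSpace ℝ (Fin p),
      ((1 / ρ) * ⟪v, w'⟫_ℝ - (1 / (2 * ρ)) * ‖w'‖ ^ 2 - f w')) =
      (1 / ρ) * ⟪v, ζ⟫_ℝ - (1 / (2 * ρ)) * ‖ζ‖ ^ 2 - f ζ := by
    refine le_antisymm (ciSup_le hmax) (le_ciSup (aux_bdd f hf ρ hρ v) ζ)
  rw [hsup]
  have hle : (1 / ρ) * ⟪v', ζ⟫_ℝ - (1 / (2 * ρ)) * ‖ζ‖ ^ 2 - f ζ ≤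
      ⨆ w' : EuclideanSpace ℝ (Fin p),
        ((1 / ρ) * ⟪v', w'⟫_ℝ - (1 / (2 * ρ)) * ‖w'‖ ^ 2 - f w') :=
    le_ciSup (aux_bdd f hf ρ hρ v') ζ
  refine le_trans (le_of_eq ?_) hle
  have hadj : ⟪(ContinuousLinearMap.adjoint U) ζ, s' - s⟫_ℝ = ⟪ζ, U (s' - s)⟫_ℝ :=
    ContinuousLinearMap.adjoint_inner_left U (s' - s) ζ
  have hUsub : ⟪ζ, U (s' - s)⟫_ℝ = ⟪v', ζ⟫_ℝ - ⟪v, ζ⟫_ℝ := by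
    rw [map_sub, inner_sub_right]
    simp only [hv, hv', inner_add_left]
    rw [real_inner_comm (U s') ζ, real_inner_comm (U s) ζ]
    ring
  rw [hadj, hUsub]
  ring
end

section
/- Let f : ℝᵖ → ℝ be bounded below, ρ > 0, let U be a real p×q matrix, u ∈ ℝᵖ, τ ≥ 0, xᵗ ∈ ℝ^q, and let ζᵗ ∈ prox_{ρ f}(U xᵗ + u). Define r_ρ(x) := e_ρ f(U x + u) and the surrogate r̂(x) := (1/(2ρ))‖U x + u‖² − D_{ρ,f}(U xᵗ + u) − (1/ρ)⟨Uᵀ ζᵗ, x − xᵗ⟩ + (τ/2)‖x − xᵗ‖². Then for every x ∈ ℝ^q, r_ρ(x) ≤ r̂(x) − (τ/2)‖x − xᵗ‖², and moreover r_ρ(xᵗ) = r̂(xᵗ). -/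
open scoped InnerProductSpace

/-- With `r_ρ(x) := e_ρ f (U x + u)` and the convex surrogate
`r̂(x) := (1/(2ρ))‖U x + u‖² − D_{ρ,f}(U xᵗ + u) − (1/ρ)⟪Uᵀ ζᵗ, x − xᵗ⟫ + (τ/2)‖x − xᵗ‖²`,
built from `ζᵗ ∈ prox_{ρ f}(U xᵗ + u)`, one has
`r_ρ(x) ≤ r̂(x) − (τ/2)‖x − xᵗ‖²` for every `x`, and `r_ρ(xᵗ) = r̂(xᵗ)`. -/
theorem stmt_5 {p q : ℕ} (f : EuclideanSpace ℝ (Fin p) → ℝ)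
    (hf : BddBelow (Set.range f)) (ρ : ℝ) (hρ : 0 < ρ)
    (U : EuclideanSpace ℝ (Fin q) →L[ℝ] EuclideanSpace ℝ (Fin p))
    (u : EuclideanSpace ℝ (Fin p)) (τ : ℝ) (hτ : 0 ≤ τ)
    (xt : EuclideanSpace ℝ (Fin q)) (ζt : EuclideanSpace ℝ (Fin p))
    (hζt : ∀ w' : EuclideanSpace ℝ (Fin p),
      (1 / (2 * ρ)) * ‖ζt - (U xt + u)‖ ^ 2 + f ζt ≤
        (1 / (2 * ρ)) * ‖w' - (U xt + u)‖ ^ 2 + f w') :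
    (∀ x : EuclideanSpace ℝ (Fin q),
      (⨅ w' : EuclideanSpace ℝ (Fin p), ((1 / (2 * ρ)) * ‖w' - (U x + u)‖ ^ 2 + f w')) ≤
        ((1 / (2 * ρ)) * ‖U x + u‖ ^ 2 -
          (⨆ w' : EuclideanSpace ℝ (Fin p),
            ((1 / ρ) * ⟪U xt + u, w'⟫_ℝ - (1 / (2 * ρ)) * ‖w'‖ ^ 2 - f w')) -
          (1 / ρ) * ⟪(ContinuousLinearMap.adjoint U) ζt, x - xt⟫_ℝ +
          (τ / 2) * ‖x - xt‖ ^ 2) - (τ / 2) * ‖x - xt‖ ^ 2) ∧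
    (⨅ w' : EuclideanSpace ℝ (Fin p), ((1 / (2 * ρ)) * ‖w' - (U xt + u)‖ ^ 2 + f w')) =
      (1 / (2 * ρ)) * ‖U xt + u‖ ^ 2 -
        (⨆ w' : EuclideanSpace ℝ (Fin p),
          ((1 / ρ) * ⟪U xt + u, w'⟫_ℝ - (1 / (2 * ρ)) * ‖w'‖ ^ 2 - f w')) -
        (1 / ρ) * ⟪(ContinuousLinearMap.adjoint U) ζt, xt - xt⟫_ℝ +
        (τ / 2) * ‖xt - xt‖ ^ 2 := by
  have hρ' : ρ ≠ 0 := ne_of_gt hρ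
  set v := U xt + u with hv
  -- key algebraic identity
  have key : ∀ w' : EuclideanSpace ℝ (Fin p),
      (1 / (2 * ρ)) * ‖w' - v‖ ^ 2 + f w' =
        (1 / (2 * ρ)) * ‖v‖ ^ 2 -
          ((1 / ρ) * ⟪v, w'⟫_ℝ - (1 / (2 * ρ)) * ‖w'‖ ^ 2 - f w') := by
    intro w'
    rw [@norm_sub_sq_real, real_inner_comm w' v]
    field_simp
    ring
  -- g w' ≤ g ζt
  have hg : ∀ w' : EuclideanSpace ℝ (Fin p),
      (1 / ρ) * ⟪v, w'⟫_ℝ - (1 / (2 * ρ)) * ‖w'‖ ^ 2 - f w' ≤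
        (1 / ρ) * ⟪v, ζt⟫_ℝ - (1 / (2 * ρ)) * ‖ζt‖ ^ 2 - f ζt := by
    intro w'
    have := hζt w'
    rw [key w', key ζt] at this
    linarith
  have hD : (⨆ w' : EuclideanSpace ℝ (Fin p),
      ((1 / ρ) * ⟪v, w'⟫_ℝ - (1 / (2 * ρ)) * ‖w'‖ ^ 2 - f w')) =
      (1 / ρ) * ⟪v, ζt⟫_ℝ - (1 / (2 * ρ)) * ‖ζt‖ ^ 2 - f ζt := by
    have hbA : BddAbove (Set.range fun w' : EuclideanSpace ℝ (Fin p) =>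
        (1 / ρ) * ⟪v, w'⟫_ℝ - (1 / (2 * ρ)) * ‖w'‖ ^ 2 - f w') := by
      refine ⟨(1 / ρ) * ⟪v, ζt⟫_ℝ - (1 / (2 * ρ)) * ‖ζt‖ ^ 2 - f ζt, ?_⟩
      rintro y ⟨w', rfl⟩; exact hg w'
    exact le_antisymm (ciSup_le hg) (le_ciSup hbA ζt)
  obtain ⟨c, hc⟩ := hf
  have hbdd : ∀ x : EuclideanSpace ℝ (Fin q),
      BddBelow (Set.range fun w' : EuclideanSpace ℝ (Fin p) =>
        (1 / (2 * ρ)) * ‖w' - (U x + u)‖ ^ 2 + f w') := by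
    intro x
    refine ⟨c, ?_⟩
    rintro y ⟨w', rfl⟩
    have h1 : (0:ℝ) ≤ (1 / (2 * ρ)) * ‖w' - (U x + u)‖ ^ 2 :=
      mul_nonneg (by positivity) (by positivity)
    have h2 : c ≤ f w' := hc ⟨w', rfl⟩
    linarith
  constructor
  · intro x
    have hle := ciInf_le (hbdd x) ζt
    refine hle.trans_eq ?_
    rw [hD]
    have hUa : ⟪(ContinuousLinearMap.adjoint U) ζt, x - xt⟫_ℝ =
        ⟪ζt, U x + u⟫_ℝ - ⟪ζt, v⟫_ℝ := by
      rw [ContinuousLinearMap.adjoint_inner_left]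
      have : U (x - xt) = (U x + u) - v := by
        rw [hv, map_sub]; abel
      rw [this, inner_sub_right]
    rw [hUa, @norm_sub_sq_real, real_inner_comm v ζt]
    field_simp
    ring
  · have hinf : (⨅ w' : EuclideanSpace ℝ (Fin p),
        ((1 / (2 * ρ)) * ‖w' - v‖ ^ 2 + f w')) =
        (1 / (2 * ρ)) * ‖ζt - v‖ ^ 2 + f ζt :=
      le_antisymm (ciInf_le (hbdd xt) ζt) (le_ciInf hζt)
    rw [hinf, hD, key ζt, sub_self, inner_zero_right, norm_zero]
    ring
end

section
/- Let f : ℝᵐ → ℝ be convex and differentiable, let A : ℝᵐ → ℝˢ be a linear map with adjoint Aᵀ, and let b ∈ ℝˢ. Define H : ℝᵐ × ℝˢ → ℝᵐ × ℝˢ by H(w, M) := (∇f(w) + Aᵀ M, b − A w). Then H is monotone on all of ℝᵐ × ℝˢ: for all (w, M) and (w', M'), ⟨H(w, M) − H(w', M'), (w, M) − (w', M')⟩ ≥ 0. -/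
open scoped InnerProductSpace Gradient

open AffineMap

section GradientMonotone

variable {F : Type*} [NormedAddCommGroup F] [InnerProductSpace ℝ F] [CompleteSpace F]
  {f : F → ℝ} {s : Set F} {x y : F}

theorem DifferentiableAt.hasDerivAt_comp_lineMap {t : ℝ}
    (hf : DifferentiableAt ℝ f (lineMap y x t)) :
    HasDerivAt (f ∘ lineMap y x) ⟪∇ f (lineMap y x t), x - y⟫_ℝ t := by
  rw [inner_gradient_left]
  exact hf.hasFDerivAt.comp_hasDerivAt t hasDerivAt_lineMap

/-- On the segment from `y` to `x`, `f` is a convex function of one variable, whose derivative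
at `0` is at most its slope on `[0, 1]`, which is at most its derivative at `1`. -/
theorem ConvexOn.inner_gradient_sub_gradient_nonneg (hfc : ConvexOn ℝ s f)
    (hx : x ∈ s) (hy : y ∈ s) (hfx : DifferentiableAt ℝ f x) (hfy : DifferentiableAt ℝ f y) :
    0 ≤ ⟪∇ f x - ∇ f y, x - y⟫_ℝ := by
  have hg : ConvexOn ℝ (lineMap y x ⁻¹' s) (f ∘ lineMap y x) := hfc.comp_affineMap _
  have h0 : (0 : ℝ) ∈ lineMap y x ⁻¹' s := by simpa using hy
  have h1 : (1 : ℝ) ∈ lineMap y x ⁻¹' s := by simpa using hx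
  have hd0 := DifferentiableAt.hasDerivAt_comp_lineMap (x := x) (y := y) (t := 0)
    (by simpa using hfy)
  have hd1 := DifferentiableAt.hasDerivAt_comp_lineMap (x := x) (y := y) (t := 1)
    (by simpa using hfx)
  simp only [lineMap_apply_zero, lineMap_apply_one] at hd0 hd1
  rw [inner_sub_left, sub_nonneg]
  exact (hg.le_slope_of_hasDerivAt h0 h1 zero_lt_one hd0).trans
    (hg.slope_le_of_hasDerivAt h0 h1 zero_lt_one hd1)

end GradientMonotone

/-- The KKT map `H(w, M) := (∇f(w) + Aᵀ M, b − A w)` of a smooth convex program with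
affine constraints is monotone on the whole product space: for all `(w, M)` and
`(w', M')`, `⟪H(w,M) − H(w',M'), (w,M) − (w',M')⟫ ≥ 0`, where the inner product on
the product is the sum of the componentwise inner products. -/
theorem stmt_8 {m s : ℕ} (f : EuclideanSpace ℝ (Fin m) → ℝ)
    (hfc : ConvexOn ℝ Set.univ f) (hfd : Differentiable ℝ f)
    (A : EuclideanSpace ℝ (Fin m) →L[ℝ] EuclideanSpace ℝ (Fin s))
    (b : EuclideanSpace ℝ (Fin s)) :
    ∀ (w w' : EuclideanSpace ℝ (Fin m)) (M M' : EuclideanSpace ℝ (Fin s)),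
      0 ≤ ⟪(gradient f w + (ContinuousLinearMap.adjoint A) M) -
            (gradient f w' + (ContinuousLinearMap.adjoint A) M'), w - w'⟫_ℝ +
          ⟪(b - A w) - (b - A w'), M - M'⟫_ℝ := by
  intro w w' M M'
  have hgrad := hfc.inner_gradient_sub_gradient_nonneg (Set.mem_univ w) (Set.mem_univ w')
    (hfd w) (hfd w')
  -- The linear part `(w, M) ↦ (Aᵀ M, -A w)` is skew-adjoint, so it contributes nothing.
  have hskew : ⟪(ContinuousLinearMap.adjoint A) (M - M'), w - w'⟫_ℝ
      + ⟪-A (w - w'), M - M'⟫_ℝ = 0 := by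
    rw [ContinuousLinearMap.adjoint_inner_left, inner_neg_left, real_inner_comm]
    ring
  have hsplit : (∇ f w + (ContinuousLinearMap.adjoint A) M)
      - (∇ f w' + (ContinuousLinearMap.adjoint A) M')
      = (∇ f w - ∇ f w') + (ContinuousLinearMap.adjoint A) (M - M') := by
    rw [map_sub]; abel
  have hconstr : (b - A w) - (b - A w') = -A (w - w') := by
    rw [map_sub]; abel
  rw [hsplit, hconstr, inner_add_left]
  linarith
end

section
/- Let n be a natural number, K > 0 a real number, Q₁ and Q₂ symmetric positive semidefinite real n×n matrices, ρ > 0, τ > 0, vectors c, r̄₁, r̄₂ ∈ ℝⁿ, e ∈ ℝⁿ the all-ones vector, and real constants κ₁, κ₂, κ₃. Define H : ℝⁿ × ℝⁿ × ℝ × ℝ × ℝ × ℝ × ℝ → ℝⁿ × ℝⁿ × ℝ × ℝ × ℝ × ℝ × ℝ by H(x, y, α₁, α₂, π₁, π₂, π₃) := (2Q₁x + (1/ρ + τ)x − c + α₁e − α₂r̄₁ + 2π₃(x − y), (2/K)Q₂y + π₁e − π₂r̄₂ + 2π₃(y − x), 1 − ⟨e, x⟩, ⟨r̄₁, x⟩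 − κ₁, 1 − ⟨e, y⟩, ⟨r̄₂, y⟩ − κ₂, κ₃ − ‖x − y‖²). Then H is monotone on the convex set S := {(x, y, α₁, α₂, π₁, π₂, π₃) : π₃ ≥ 0}: for all z, z' ∈ S, ⟨H(z) − H(z'), z − z'⟩ ≥ 0. -/
open scoped InnerProductSpace

/-!
`H` is the sum of three pieces. The `x`, `y` blocks without the `π₃`-terms are the gradient of
the convex quadratic `x ↦ xᵀQ₁x + (1/ρ + τ)‖x‖²/2 - ⟪c, x⟫`, `y ↦ yᵀQ₂y/K`, so they contribute
`2⟪Q₁u, u⟫ + (1/ρ + τ)‖u‖² + (2/K)⟪Q₂v, v⟫ ≥ 0` with `u = x - x'`, `v = y - y'`. The coupling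
between the multipliers `α₁, α₂, π₁, π₂` and the linear constraints is skew-symmetric and
contributes nothing. Finally the `π₃`-terms, with `w = x - y`, give
`2⟪π₃w - π₃'w', w - w'⟫ + (‖w'‖² - ‖w‖²)(π₃ - π₃') = (π₃ + π₃')‖w - w'‖²`,
which is nonnegative on `{π₃ ≥ 0}`.
-/

theorem stmt_9_general {n : ℕ} (K : ℝ) (hK : 0 < K)
    (Q₁ Q₂ : Matrix (Fin n) (Fin n) ℝ)
    (hQ₁ : Q₁.PosSemidef) (hQ₂ : Q₂.PosSemidef)
    (ρ τ : ℝ) (hρ : 0 < ρ) (hτ : 0 < τ)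
    (c r₁ r₂ : EuclideanSpace ℝ (Fin n))
    (e : EuclideanSpace ℝ (Fin n))
    (κ₁ κ₂ κ₃ : ℝ) :
    ∀ (x y x' y' : EuclideanSpace ℝ (Fin n))
      (α₁ α₂ π₁ π₂ π₃ α₁' α₂' π₁' π₂' π₃' : ℝ),
      0 ≤ π₃ → 0 ≤ π₃' →
      0 ≤
        ⟪((2 : ℝ) • Matrix.toEuclideanLin Q₁ x + (1 / ρ + τ) • x - c + α₁ • e - α₂ • r₁ +
              (2 * π₃) • (x - y)) -
            ((2 : ℝ) • Matrix.toEuclideanLin Q₁ x' + (1 / ρ + τ) • x' - c + α₁' • e -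
              α₂' • r₁ + (2 * π₃') • (x' - y')), x - x'⟫_ℝ +
        ⟪((2 / K) • Matrix.toEuclideanLin Q₂ y + π₁ • e - π₂ • r₂ + (2 * π₃) • (y - x)) -
            ((2 / K) • Matrix.toEuclideanLin Q₂ y' + π₁' • e - π₂' • r₂ +
              (2 * π₃') • (y' - x')), y - y'⟫_ℝ +
        ((1 - ⟪e, x⟫_ℝ) - (1 - ⟪e, x'⟫_ℝ)) * (α₁ - α₁') +
        ((⟪r₁, x⟫_ℝ - κ₁) - (⟪r₁, x'⟫_ℝ - κ₁)) * (α₂ - α₂') +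
        ((1 - ⟪e, y⟫_ℝ) - (1 - ⟪e, y'⟫_ℝ)) * (π₁ - π₁') +
        ((⟪r₂, y⟫_ℝ - κ₂) - (⟪r₂, y'⟫_ℝ - κ₂)) * (π₂ - π₂') +
        ((κ₃ - ‖x - y‖ ^ 2) - (κ₃ - ‖x' - y'‖ ^ 2)) * (π₃ - π₃') := by
  intro x y x' y' α₁ α₂ π₁ π₂ π₃ α₁' α₂' π₁' π₂' π₃' hπ₃ hπ₃'
  have hQ₁u := (Matrix.isPositive_toEuclideanLin_iff.mpr hQ₁).inner_nonneg_left (x - x')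
  have hQ₂v := (Matrix.isPositive_toEuclideanLin_iff.mpr hQ₂).inner_nonneg_left (y - y')
  have hμ : 0 ≤ 1 / ρ + τ := by positivity
  have hν : 0 ≤ 2 / K := by positivity
  calc (0 : ℝ)
      ≤ 2 * ⟪Matrix.toEuclideanLin Q₁ (x - x'), x - x'⟫_ℝ + (1 / ρ + τ) * ‖x - x'‖ ^ 2
          + (2 / K) * ⟪Matrix.toEuclideanLin Q₂ (y - y'), y - y'⟫_ℝ
          + (π₃ + π₃') * ‖(x - y) - (x' - y')‖ ^ 2 :=
        add_nonneg (add_nonneg (add_nonneg (mul_nonneg zero_le_two hQ₁u)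
          (mul_nonneg hμ (sq_nonneg _))) (mul_nonneg hν hQ₂v))
          (mul_nonneg (add_nonneg hπ₃ hπ₃') (sq_nonneg _))
    _ = _ := by
      simp only [← real_inner_self_eq_norm_sq, map_sub, inner_sub_left, inner_sub_right,
        inner_add_left, real_inner_smul_left,
        real_inner_comm x' x, real_inner_comm y x, real_inner_comm y' x,
        real_inner_comm x' y, real_inner_comm y' y, real_inner_comm y' x',
        real_inner_comm x e, real_inner_comm x' e, real_inner_comm y e, real_inner_comm y' e,
        real_inner_comm x r₁, real_inner_comm x' r₁, real_inner_comm y r₂, real_inner_comm y' r₂]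
      ring

/-- The map `H` of the linearized two-stage SVI for the Markowitz-type model is monotone
on the set `{π₃ ≥ 0}`: writing the inner product on the product space as the sum of the
componentwise inner products, `⟪H(z) − H(z'), z − z'⟫ ≥ 0` for all `z, z'` with
`π₃, π₃' ≥ 0`. -/
theorem stmt_9 {n : ℕ} (K : ℝ) (hK : 0 < K)
    (Q₁ Q₂ : Matrix (Fin n) (Fin n) ℝ)
    (hQ₁sym : Q₁.IsSymm) (hQ₂sym : Q₂.IsSymm)
    (hQ₁ : Q₁.PosSemidef) (hQ₂ : Q₂.PosSemidef)
    (ρ τ : ℝ) (hρ : 0 < ρ) (hτ : 0 < τ)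
    (c r₁ r₂ : EuclideanSpace ℝ (Fin n))
    (e : EuclideanSpace ℝ (Fin n)) (he : ∀ i, e i = 1)
    (κ₁ κ₂ κ₃ : ℝ) :
    ∀ (x y x' y' : EuclideanSpace ℝ (Fin n))
      (α₁ α₂ π₁ π₂ π₃ α₁' α₂' π₁' π₂' π₃' : ℝ),
      0 ≤ π₃ → 0 ≤ π₃' →
      0 ≤
        ⟪((2 : ℝ) • Matrix.toEuclideanLin Q₁ x + (1 / ρ + τ) • x - c + α₁ • e - α₂ • r₁ +
              (2 * π₃) • (x - y)) -
            ((2 : ℝ) • Matrix.toEuclideanLin Q₁ x' + (1 / ρ + τ) • x' - c + α₁' • e -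
              α₂' • r₁ + (2 * π₃') • (x' - y')), x - x'⟫_ℝ +
        ⟪((2 / K) • Matrix.toEuclideanLin Q₂ y + π₁ • e - π₂ • r₂ + (2 * π₃) • (y - x)) -
            ((2 / K) • Matrix.toEuclideanLin Q₂ y' + π₁' • e - π₂' • r₂ +
              (2 * π₃') • (y' - x')), y - y'⟫_ℝ +
        ((1 - ⟪e, x⟫_ℝ) - (1 - ⟪e, x'⟫_ℝ)) * (α₁ - α₁') +
        ((⟪r₁, x⟫_ℝ - κ₁) - (⟪r₁, x'⟫_ℝ - κ₁)) * (α₂ - α₂') +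
        ((1 - ⟪e, y⟫_ℝ) - (1 - ⟪e, y'⟫_ℝ)) * (π₁ - π₁') +
        ((⟪r₂, y⟫_ℝ - κ₂) - (⟪r₂, y'⟫_ℝ - κ₂)) * (π₂ - π₂') +
        ((κ₃ - ‖x - y‖ ^ 2) - (κ₃ - ‖x' - y'‖ ^ 2)) * (π₃ - π₃') :=
  stmt_9_general K hK Q₁ Q₂ hQ₁ hQ₂ ρ τ hρ hτ c r₁ r₂ e κ₁ κ₂ κ₃
end

section
/- Let A : ℝⁿ → ℝᵐ be a linear map with adjoint Aᵀ, let b ∈ ℝᵐ, and let K ⊆ ℝᵐ be a closed convex set. Assume the Slater condition: there exists ẘ ∈ ℝⁿ with Aẘ + b in the interior of K. Let Φ := {w ∈ ℝⁿ : Aw + b ∈ K} and let x ∈ Φ. Then the normal cones satisfy N_Φ(x) = {Aᵀμ : μ ∈ N_K(Ax + b)}. -/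
open scoped InnerProductSpace

private lemma aux_small_t (a c u : ℝ) (h : ∀ t : ℝ, 0 < t → t ≤ 1 → a + t * c ≤ u) : a ≤ u := by
  by_contra hc
  push_neg at hc
  rcases le_or_gt 0 c with hb | hb
  · have h1 := h 1 one_pos le_rfl
    nlinarith
  · set t : ℝ := min 1 ((a - u) / (2 * (-c))) with ht
    have hpos : 0 < (a - u) / (2 * (-c)) := by
      apply div_pos (by linarith) (by linarith)
    have ht0 : 0 < t := lt_min one_pos hpos
    have ht1 : t ≤ 1 := min_le_left _ _
    have h2 := h t ht0 ht1
    have ht2 : t ≤ (a - u) / (2 * (-c)) := min_le_right _ _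
    have h3 : t * (2 * (-c)) ≤ a - u :=
      (le_div_iff₀ (by linarith : (0:ℝ) < 2 * (-c))).1 ht2
    nlinarith

/-- Under the Slater condition, the normal cone (in the sense of convex analysis) to
`Φ = {w : A w + b ∈ K}` at `x ∈ Φ` equals `Aᵀ (N_K(A x + b))`. -/
theorem stmt_11 {n m : ℕ}
    (A : EuclideanSpace ℝ (Fin n) →L[ℝ] EuclideanSpace ℝ (Fin m))
    (b : EuclideanSpace ℝ (Fin m)) (K : Set (EuclideanSpace ℝ (Fin m)))
    (hKcl : IsClosed K) (hKcv : Convex ℝ K)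
    (hSlater : ∃ w₀ : EuclideanSpace ℝ (Fin n), A w₀ + b ∈ interior K)
    (x : EuclideanSpace ℝ (Fin n)) (hx : A x + b ∈ K) :
    {v : EuclideanSpace ℝ (Fin n) |
        ∀ ω ∈ {w : EuclideanSpace ℝ (Fin n) | A w + b ∈ K}, ⟪v, ω - x⟫_ℝ ≤ 0} =
      (ContinuousLinearMap.adjoint A) ''
        {μ : EuclideanSpace ℝ (Fin m) | ∀ ω ∈ K, ⟪μ, ω - (A x + b)⟫_ℝ ≤ 0} := by
  ext v
  simp only [Set.mem_setOf_eq, Set.mem_image]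
  constructor
  · -- hard direction
    intro hv
    obtain ⟨w₀, hw₀⟩ := hSlater
    set s : Set (EuclideanSpace ℝ (Fin m) × ℝ) := (interior K) ×ˢ Set.Ioi (0:ℝ) with hs_def
    set t : Set (EuclideanSpace ℝ (Fin m) × ℝ) :=
      Set.range (fun w => (A w + b, ⟪v, w - x⟫_ℝ)) with ht_def
    have hs_open : IsOpen s := isOpen_interior.prod isOpen_Ioi
    have hs_cv : Convex ℝ s := (hKcv.interior).prod (convex_Ioi 0)
    have ht_cv : Convex ℝ t := by
      rintro p ⟨w₁, rfl⟩ q ⟨w₂, rfl⟩ a a' ha ha' hab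
      refine ⟨a • w₁ + a' • w₂, ?_⟩
      have h1 : A (a • w₁ + a' • w₂) + b
          = a • (A w₁ + b) + a' • (A w₂ + b) := by
        rw [map_add, map_smul, map_smul]
        match_scalars <;> linarith
      have h2 : ⟪v, (a • w₁ + a' • w₂) - x⟫_ℝ
          = a * ⟪v, w₁ - x⟫_ℝ + a' * ⟪v, w₂ - x⟫_ℝ := by
        have hx' : (a • w₁ + a' • w₂) - x = a • (w₁ - x) + a' • (w₂ - x) := by
          match_scalars <;> linarith
        rw [hx', inner_add_right, real_inner_smul_right, real_inner_smul_right]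
      simp only [Prod.smul_mk, Prod.mk_add_mk, smul_eq_mul]
      rw [h1, h2]
    have hdisj : Disjoint s t := by
      rw [Set.disjoint_left]
      rintro p ⟨hp1, hp2⟩ ⟨w, rfl⟩
      dsimp only at hp1 hp2
      rw [Set.mem_Ioi] at hp2
      exact absurd (hv w (interior_subset hp1)) (not_le.2 hp2)
    obtain ⟨f, u, hfs, hft⟩ := geometric_hahn_banach_open hs_cv hs_open ht_cv hdisj
    set g : EuclideanSpace ℝ (Fin m) →L[ℝ] ℝ :=
      f.comp (ContinuousLinearMap.inl ℝ (EuclideanSpace ℝ (Fin m)) ℝ) with hg_def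
    set c : ℝ := f (0, 1) with hc_def
    have hf_eq : ∀ (y : EuclideanSpace ℝ (Fin m)) (r : ℝ), f (y, r) = g y + r * c := by
      intro y r
      have hyr : (y, r) = (y, (0:ℝ)) + r • ((0 : EuclideanSpace ℝ (Fin m)), (1:ℝ)) := by
        simp [Prod.ext_iff]
      rw [hyr, map_add, map_smul]
      simp [hg_def, hc_def, smul_eq_mul]
    have hfs' : ∀ y ∈ interior K, ∀ r : ℝ, 0 < r → g y + r * c < u := by
      intro y hy r hr
      have := hfs (y, r) ⟨hy, hr⟩
      rwa [hf_eq] at this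
    have hft' : ∀ w, u ≤ g (A w + b) + ⟪v, w - x⟫_ℝ * c := by
      intro w
      have := hft (A w + b, ⟪v, w - x⟫_ℝ) ⟨w, rfl⟩
      rwa [hf_eq] at this
    have hint : ∀ y ∈ interior K, g y ≤ u := by
      intro y hy
      exact aux_small_t _ c u fun r hr _ => (hfs' y hy r hr).le
    have hgK : ∀ y ∈ K, g y ≤ u := by
      intro y hy
      apply aux_small_t (g y) (g (A w₀ + b) - g y) u
      intro r hr hr1
      have hmem : y + r • ((A w₀ + b) - y) ∈ interior K :=
        hKcv.add_smul_sub_mem_interior hy hw₀ ⟨hr, hr1⟩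
      have := hint _ hmem
      rwa [map_add, map_smul, map_sub, smul_eq_mul] at this
    have hc_le : c ≤ 0 := by
      by_contra hcpos
      push_neg at hcpos
      have hy₀ := hint _ hw₀
      have hr : (0:ℝ) < (u - g (A w₀ + b) + 1) / c := by
        apply div_pos (by linarith) hcpos
      have := hfs' _ hw₀ _ hr
      rw [div_mul_cancel₀ _ (ne_of_gt hcpos)] at this
      linarith
    have hc_ne : c < 0 := by
      rcases lt_or_eq_of_le hc_le with h | h
      · exact h
      · exfalso
        have h1 := hfs' _ hw₀ 1 one_pos
        have h2 := hft' w₀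
        rw [h] at h1 h2
        simp only [mul_zero, add_zero] at h1 h2
        linarith
    have hu : g (A x + b) = u := by
      refine le_antisymm (hgK _ hx) ?_
      have := hft' x
      simpa using this
    have hkey : ∀ h : EuclideanSpace ℝ (Fin n), 0 ≤ g (A h) + ⟪v, h⟫_ℝ * c := by
      intro h
      have := hft' (x + h)
      have e1 : A (x + h) + b = (A x + b) + A h := by rw [map_add]; abel
      have e2 : (x + h) - x = h := by abel
      rw [e1, map_add, hu, e2] at this
      linarith
    have heq : ∀ h : EuclideanSpace ℝ (Fin n), g (A h) = -(⟪v, h⟫_ℝ * c) := by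
      intro h
      have h1 := hkey h
      have h2 := hkey (-h)
      rw [map_neg, map_neg, inner_neg_right] at h2
      linarith
    set μ' : EuclideanSpace ℝ (Fin m) :=
      (InnerProductSpace.toDual ℝ (EuclideanSpace ℝ (Fin m))).symm g with hμ'_def
    have hμ' : ∀ y : EuclideanSpace ℝ (Fin m), ⟪μ', y⟫_ℝ = g y :=
      fun y => InnerProductSpace.toDual_symm_apply
    have hc0 : c ≠ 0 := ne_of_lt hc_ne
    refine ⟨(-c)⁻¹ • μ', ?_, ?_⟩
    · intro ω hω
      have hsub : ⟪μ', ω - (A x + b)⟫_ℝ = g ω - g (A x + b) := by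
        rw [hμ', map_sub]
      rw [real_inner_smul_left, hsub, hu]
      have h1 : g ω - u ≤ 0 := by linarith [hgK ω hω]
      have h2 : (0:ℝ) ≤ (-c)⁻¹ := inv_nonneg.2 (by linarith)
      exact mul_nonpos_of_nonneg_of_nonpos h2 h1
    · apply ext_inner_right ℝ
      intro h
      rw [ContinuousLinearMap.adjoint_inner_left, real_inner_smul_left, hμ', heq]
      have hnc : (-c) ≠ 0 := neg_ne_zero.2 hc0
      field_simp
  · -- easy direction
    rintro ⟨μ, hμ, rfl⟩ ω hω
    rw [ContinuousLinearMap.adjoint_inner_left]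
    have hsub : A (ω - x) = (A ω + b) - (A x + b) := by rw [map_sub]; abel
    rw [hsub]
    exact hμ (A ω + b) hω
end

section
/- Let A : ℝⁿ → ℝᵐ be a linear map, let b ∈ ℝᵐ, and let K ⊆ ℝᵐ be a closed convex set. Assume the Slater condition: there exists ẘ ∈ ℝⁿ with Aẘ + b in the interior of K. Let Φ := {w ∈ ℝⁿ : Aw + b ∈ K} and let x ∈ Φ. Then the tangent cones satisfy T_Φ(x) = {d ∈ ℝⁿ : A d ∈ T_K(Ax + b)}. -/
/-!
Both tangent cones are closures of cones of feasible directions, and the feasible directions of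
`Φ = {w | A w + b ∈ K}` at `x` are exactly the preimage under `A` of those of `K` at `A x + b`.
So it suffices that taking closures commutes with `A⁻¹'` for the convex cone `C` of feasible
directions of `K`. Slater's point `w₀` gives `A (w₀ - x) ∈ interior C`; then if `A d ∈ closure C`,
the open segment from `w₀ - x` to `d` is mapped into `interior C`, and `d` lies in the closure of
that segment.
-/

open Set

section FeasibleDirections

variable {E F : Type*} [AddCommGroup E] [Module ℝ E] [AddCommGroup F] [Module ℝ F]

/-- The cone `{t • (ω - x) | t ≥ 0, ω ∈ s}`, whose closure is the tangent cone of `s` at `x`. -/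
def feasibleDirections (s : Set E) (x : E) : Set E :=
  {d | ∃ t : ℝ, 0 ≤ t ∧ ∃ ω ∈ s, d = t • (ω - x)}

theorem Convex.feasibleDirections {s : Set E} (hs : Convex ℝ s) (x : E) :
    Convex ℝ (feasibleDirections s x) := by
  rintro _ ⟨t₁, ht₁, ω₁, hω₁, rfl⟩ _ ⟨t₂, ht₂, ω₂, hω₂, rfl⟩ a c ha hc hac
  have ht₁' : 0 ≤ a * t₁ := mul_nonneg ha ht₁
  have ht₂' : 0 ≤ c * t₂ := mul_nonneg hc ht₂
  rcases (add_nonneg ht₁' ht₂').eq_or_lt with hT | hT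
  · refine ⟨0, le_rfl, ω₁, hω₁, ?_⟩
    obtain ⟨h₁, h₂⟩ := (add_eq_zero_iff_of_nonneg ht₁' ht₂').1 hT.symm
    simp [smul_smul, h₁, h₂]
  · -- rescale to the convex combination of `ω₁, ω₂` with weights proportional to `a t₁, c t₂`
    set T := a * t₁ + c * t₂
    refine ⟨T, hT.le, (a * t₁ / T) • ω₁ + (c * t₂ / T) • ω₂,
      hs hω₁ hω₂ (by positivity) (by positivity) (by rw [← add_div, div_self hT.ne']), ?_⟩
    match_scalars <;> field_simp
    ring

theorem feasibleDirections_preimage (A : E →ₗ[ℝ] F) (b : F) {K : Set F} {x : E}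
    (hx : A x + b ∈ K) :
    feasibleDirections {w | A w + b ∈ K} x = A ⁻¹' feasibleDirections K (A x + b) := by
  ext d
  constructor
  · rintro ⟨t, ht, ω, hω, rfl⟩
    exact ⟨t, ht, A ω + b, hω, by rw [map_smul, map_sub]; abel_nf⟩
  · rintro ⟨t, ht, ω, hω, hAd⟩
    rcases ht.eq_or_lt with rfl | ht
    · refine ⟨1, zero_le_one, x + d, ?_, by simp⟩
      simpa [show A d = 0 by simpa using hAd, add_right_comm] using hx
    · refine ⟨t, ht.le, x + t⁻¹ • d, ?_, by simp [smul_smul, ht.ne']⟩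
      simp only [mem_ofPred_eq, map_add, map_smul, hAd, smul_smul, inv_mul_cancel₀ ht.ne', one_smul]
      convert hω using 1
      abel

variable [TopologicalSpace E] [ContinuousAdd E]

theorem sub_mem_interior_feasibleDirections {s : Set E} {x y : E} (hy : y ∈ interior s) :
    y - x ∈ interior (feasibleDirections s x) := by
  have hsub : (· + x) ⁻¹' s ⊆ feasibleDirections s x := fun v hv =>
    ⟨1, zero_le_one, v + x, hv, by simp⟩
  refine interior_mono hsub (preimage_interior_subset_interior_preimage (continuous_add_const x) ?_)
  simpa using hy

end FeasibleDirections

theorem LinearMap.closure_preimage_eq_preimage_closure_of_convex {E F : Type*}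
    [AddCommGroup E] [Module ℝ E] [TopologicalSpace E] [ContinuousAdd E] [ContinuousSMul ℝ E]
    [AddCommGroup F] [Module ℝ F] [TopologicalSpace F] [IsTopologicalAddGroup F]
    [ContinuousConstSMul ℝ F] (A : E →ₗ[ℝ] F) (hA : Continuous A) {C : Set F}
    (hC : Convex ℝ C) (hC' : ∃ w₀, A w₀ ∈ interior C) :
    closure (A ⁻¹' C) = A ⁻¹' closure C := by
  refine (hA.closure_preimage_subset C).antisymm fun d hd => ?_
  obtain ⟨w₀, hw₀⟩ := hC'
  have hseg : openSegment ℝ w₀ d ⊆ A ⁻¹' C := by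
    rw [← image_subset_iff, ← A.coe_toAffineMap, image_openSegment]
    exact (hC.openSegment_interior_closure_subset_interior hw₀ hd).trans interior_subset
  exact closure_mono hseg (segment_subset_closure_openSegment (right_mem_segment ℝ w₀ d))

theorem stmt_12_general {n m : ℕ}
    (A : EuclideanSpace ℝ (Fin n) →ₗ[ℝ] EuclideanSpace ℝ (Fin m))
    (b : EuclideanSpace ℝ (Fin m)) (K : Set (EuclideanSpace ℝ (Fin m)))
    (hKcv : Convex ℝ K)
    (hSlater : ∃ w₀ : EuclideanSpace ℝ (Fin n), A w₀ + b ∈ interior K)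
    (x : EuclideanSpace ℝ (Fin n)) (hx : A x + b ∈ K) :
    closure {d : EuclideanSpace ℝ (Fin n) |
        ∃ t : ℝ, 0 ≤ t ∧ ∃ ω ∈ {w : EuclideanSpace ℝ (Fin n) | A w + b ∈ K},
          d = t • (ω - x)} =
      {d : EuclideanSpace ℝ (Fin n) |
        A d ∈ closure {v : EuclideanSpace ℝ (Fin m) |
          ∃ t : ℝ, 0 ≤ t ∧ ∃ ω ∈ K, v = t • (ω - (A x + b))}} := by
  obtain ⟨w₀, hw₀⟩ := hSlater
  change closure (feasibleDirections {w | A w + b ∈ K} x) =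
    A ⁻¹' closure (feasibleDirections K (A x + b))
  rw [feasibleDirections_preimage A b hx]
  refine A.closure_preimage_eq_preimage_closure_of_convex A.continuous_of_finiteDimensional
    (hKcv.feasibleDirections _) ⟨w₀ - x, ?_⟩
  simpa [map_sub] using sub_mem_interior_feasibleDirections (x := A x + b) hw₀

/-- Under the Slater condition, the tangent cone (closure of the cone of feasible
directions) to `Φ = {w : A w + b ∈ K}` at `x ∈ Φ` equals `{d : A d ∈ T_K(A x + b)}`. -/
theorem stmt_12 {n m : ℕ}
    (A : EuclideanSpace ℝ (Fin n) →ₗ[ℝ] EuclideanSpace ℝ (Fin m))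
    (b : EuclideanSpace ℝ (Fin m)) (K : Set (EuclideanSpace ℝ (Fin m)))
    (hKcl : IsClosed K) (hKcv : Convex ℝ K)
    (hSlater : ∃ w₀ : EuclideanSpace ℝ (Fin n), A w₀ + b ∈ interior K)
    (x : EuclideanSpace ℝ (Fin n)) (hx : A x + b ∈ K) :
    closure {d : EuclideanSpace ℝ (Fin n) |
        ∃ t : ℝ, 0 ≤ t ∧ ∃ ω ∈ {w : EuclideanSpace ℝ (Fin n) | A w + b ∈ K},
          d = t • (ω - x)} =
      {d : EuclideanSpace ℝ (Fin n) |
        A d ∈ closure {v : EuclideanSpace ℝ (Fin m) |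
          ∃ t : ℝ, 0 ≤ t ∧ ∃ ω ∈ K, v = t • (ω - (A x + b))}} :=
  stmt_12_general A b K hKcv hSlater x hx
end
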